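/- For every nonzero vector v ∈ ℝ³, the orbit G_cube·v = {A·v : A ∈ G_cube} has cardinality 6, 8, 12, or 24. -/

import Mathlib

open Matrix

/-- A 3×3 real matrix is a rotation if it is orthogonal with determinant 1. -/
def IsRotation (A : Matrix (Fin 3) (Fin 3) ℝ) : Prop := Aᵀ * A = 1 ∧ A.det = 1

/-- The action of a 3×3 matrix on ℝ³ by matrix–vector multiplication. -/
noncomputable def act (A : Matrix (Fin 3) (Fin 3) ℝ) (v : EuclideanSpace ℝ (Fin 3)) :
    EuclideanSpace ℝ (Fin 3) := WithLp.toLp 2 (A.mulVec v)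

/-- The orbit of a point under a set of matrices. -/
def orb (G : Set (Matrix (Fin 3) (Fin 3) ℝ)) (v : EuclideanSpace ℝ (Fin 3)) :
    Set (EuclideanSpace ℝ (Fin 3)) := {q | ∃ A ∈ G, act A v = q}

/-- The vertices (±1,±1,±1) of a cube. -/
noncomputable def Vcube : Set (EuclideanSpace ℝ (Fin 3)) :=
  {p | ∃ s₁ s₂ s₃ : ℝ, (s₁ = 1 ∨ s₁ = -1) ∧ (s₂ = 1 ∨ s₂ = -1) ∧ (s₃ = 1 ∨ s₃ = -1) ∧
    p = ![s₁, s₂, s₃]}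

/-- The octahedral rotation group: all rotations preserving the cube `Vcube` setwise. -/
noncomputable def Gcube : Set (Matrix (Fin 3) (Fin 3) ℝ) :=
  {A | IsRotation A ∧ act A '' Vcube = Vcube}

/-!
Every rotation of the cube is a signed permutation matrix: the basis vector `eₖ` is the midpoint
of two vertices, so all entries of such a matrix lie in `{-1, 0, 1}`, and an orthogonal matrix
with such entries has exactly one nonzero entry in each column. Hence the group has 24 elements,
and by orbit–stabilizer the orbit of `v` has `24 / |Stab v|` elements. A signed permutation
fixing `v` also fixes the vector of signs of the coordinates of `v`, a nonzero vector in
`{-1, 0, 1}³`, and a finite check shows that the stabilizers of these 26 vectors have at most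
4 elements.
-/

open Equiv

section SignedPerm

variable {n R : Type*} [DecidableEq n]

def signedPermMatrix [Ring R] (σ : Perm n) (s : n → ℤˣ) : Matrix n n R :=
  of fun i j => if i = σ j then ((s j : ℤ) : R) else 0

theorem signedPermMatrix_injective [Ring R] [CharZero R] :
    Function.Injective fun p : Perm n × (n → ℤˣ) => (signedPermMatrix p.1 p.2 : Matrix n n R) := by
  rintro ⟨σ, s⟩ ⟨τ, t⟩ h
  have hentry : ∀ j, (if σ j = τ j then ((t j : ℤ) : R) else 0) = ((s j : ℤ) : R) := by
    intro j
    simpa [signedPermMatrix] using (congrFun (congrFun h (σ j)) j).symm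
  have hσ : ∀ j, σ j = τ j := fun j => by
    by_contra hne
    have := hentry j
    simp only [hne, if_false] at this
    exact Int.cast_ne_zero.mpr (s j).ne_zero this.symm
  obtain rfl : σ = τ := Equiv.ext hσ
  have hs : ∀ j, s j = t j := fun j => by simpa [Units.ext_iff] using (hentry j).symm
  rw [funext hs]

variable [Fintype n]

theorem signedPermMatrix_mulVec_apply [Ring R] (σ : Perm n) (s : n → ℤˣ) (v : n → R) (j : n) :
    (signedPermMatrix σ s *ᵥ v) (σ j) = (s j : R) * v j := by
  simp [signedPermMatrix, mulVec, dotProduct, σ.injective.eq_iff]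

theorem signedPermMatrix_mulVec_eq_iff [Ring R] (σ : Perm n) (s : n → ℤˣ) (v w : n → R) :
    signedPermMatrix σ s *ᵥ v = w ↔ ∀ j, (s j : R) * v j = w (σ j) := by
  rw [funext_iff, σ.surjective.forall]
  simp only [signedPermMatrix_mulVec_apply]

theorem signedPermMatrix_eq_permMatrix_mul_diagonal [CommRing R] (σ : Perm n) (s : n → ℤˣ) :
    signedPermMatrix σ s = σ⁻¹.permMatrix R * diagonal fun j => ((s j : ℤ) : R) := by
  ext i j
  simp [signedPermMatrix, Perm.permMatrix, PEquiv.toMatrix, Equiv.eq_symm_apply, eq_comm]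

theorem det_signedPermMatrix [CommRing R] (σ : Perm n) (s : n → ℤˣ) :
    (signedPermMatrix σ s : Matrix n n R).det = ((Perm.sign σ * ∏ i, s i : ℤˣ) : ℤ) := by
  simp [signedPermMatrix_eq_permMatrix_mul_diagonal, det_mul, det_diagonal]

theorem transpose_signedPermMatrix_mul_self [CommRing R] (σ : Perm n) (s : n → ℤˣ) :
    (signedPermMatrix σ s : Matrix n n R)ᵀ * signedPermMatrix σ s = 1 := by
  rw [signedPermMatrix_eq_permMatrix_mul_diagonal, transpose_mul, transpose_permMatrix,
    diagonal_transpose, mul_assoc, ← mul_assoc (σ⁻¹⁻¹.permMatrix R), ← Matrix.permMatrix_mul,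
    mul_inv_cancel, Matrix.permMatrix_one, one_mul, diagonal_mul_diagonal]
  simp [← Int.cast_mul, ← Units.val_mul]

theorem exists_signedPermMatrix_of_transpose_mul_self_eq_one [CommRing R] [CharZero R]
    {A : Matrix n n R} (hA : Aᵀ * A = 1) (hent : ∀ i j, A i j = 0 ∨ A i j = 1 ∨ A i j = -1) :
    ∃ σ s, signedPermMatrix σ s = A := by
  classical
  have hcol : ∀ j, ∃ i, ∀ i', A i' j ≠ 0 ↔ i' = i := by
    intro j
    have hsq : ∀ i, A i j * A i j = if A i j ≠ 0 then 1 else 0 := fun i => by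
      rcases hent i j with h | h | h <;> simp [h]
    have hcard : ((Finset.univ.filter fun i => A i j ≠ 0).card : R) = 1 := by
      simpa [mul_apply, hsq, Finset.sum_ite] using congrFun (congrFun hA j) j
    obtain ⟨i, hi⟩ := Finset.card_eq_one.mp (by exact_mod_cast hcard)
    exact ⟨i, fun i' => by simpa using Finset.ext_iff.mp hi i'⟩
  choose τ hτ using hcol
  have hsq : ∀ i j, A i j ≠ 0 → A i j * A i j = 1 := fun i j h => by
    rcases hent i j with h' | h' | h' <;> simp_all
  have hτ_inj : Function.Injective τ := by
    intro j k hjk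
    by_contra hne
    have horth := congrFun (congrFun hA j) k
    rw [mul_apply, Finset.sum_eq_single (τ j) (fun i _ hi => by
      rw [transpose_apply, not_not.mp ((hτ j i).not.mpr hi), zero_mul])
      (by simp), transpose_apply, one_apply_ne hne] at horth
    have hj := hsq _ _ ((hτ j _).mpr rfl)
    have hk := hsq _ _ ((hτ k _).mpr hjk)
    have := congrArg (fun x => x * x) horth
    simp only [mul_mul_mul_comm, hj, hk, mul_one, mul_zero] at this
    exact one_ne_zero this
  refine ⟨Equiv.ofBijective τ (Finite.injective_iff_bijective.mp hτ_inj),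
    fun j => if A (τ j) j = 1 then 1 else -1, ?_⟩
  ext i j
  by_cases hij : i = τ j
  · subst hij
    rcases hent (τ j) j with h | h | h
    · exact absurd h ((hτ j _).mpr rfl)
    all_goals simp [signedPermMatrix, h, (by norm_num : (-1 : R) ≠ 1)]
  · simp [signedPermMatrix, hij, not_not.mp ((hτ j i).not.mpr hij)]

theorem sign_apply_of_signedPermMatrix_mulVec_eq_self [CommRing R] [LinearOrder R]
    [IsStrictOrderedRing R] {σ : Perm n} {s : n → ℤˣ} {v : n → R}
    (h : signedPermMatrix σ s *ᵥ v = v) (j : n) :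
    (SignType.sign (v (σ j)) : ℤ) = s j * SignType.sign (v j) := by
  rw [← (signedPermMatrix_mulVec_eq_iff σ s v v).mp h j]
  rcases Int.units_eq_one_or (s j) with hs | hs <;> simp [hs, Left.sign_neg]

end SignedPerm

theorem mem_Vcube_iff {p : EuclideanSpace ℝ (Fin 3)} : p ∈ Vcube ↔ ∀ i, p i = 1 ∨ p i = -1 := by
  constructor
  · rintro ⟨s₁, s₂, s₃, h₁, h₂, h₃, hp⟩ i
    rw [hp]
    fin_cases i <;> assumption
  · intro h
    exact ⟨p 0, p 1, p 2, h 0, h 1, h 2, by ext i; fin_cases i <;> rfl⟩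

theorem act_apply (A : Matrix (Fin 3) (Fin 3) ℝ) (p : EuclideanSpace ℝ (Fin 3)) (i : Fin 3) :
    act A p i = (A *ᵥ p) i := rfl

theorem act_mem_Vcube {A : Matrix (Fin 3) (Fin 3) ℝ} (hA : A ∈ Gcube) {p : EuclideanSpace ℝ (Fin 3)}
    (hp : p ∈ Vcube) : act A p ∈ Vcube :=
  hA.2 ▸ Set.mem_image_of_mem _ hp

theorem entry_eq_zero_or_eq_one_or_eq_neg_one_of_mem_Gcube {A : Matrix (Fin 3) (Fin 3) ℝ}
    (hA : A ∈ Gcube) (i k : Fin 3) : A i k = 0 ∨ A i k = 1 ∨ A i k = -1 := by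
  let u₀ : EuclideanSpace ℝ (Fin 3) := WithLp.toLp 2 fun _ => 1
  let u : EuclideanSpace ℝ (Fin 3) := WithLp.toLp 2 fun j => if j = k then 1 else -1
  have hu₀ : u₀ ∈ Vcube := mem_Vcube_iff.mpr fun _ => Or.inl rfl
  have hu : u ∈ Vcube := mem_Vcube_iff.mpr fun j => by by_cases h : j = k <;> simp [u, h]
  have hsum : act A u₀ i + act A u i = 2 * A i k := by
    fin_cases k <;> simp [u₀, u, act_apply, mulVec, dotProduct, Fin.sum_univ_three] <;> ring
  rcases mem_Vcube_iff.mp (act_mem_Vcube hA hu₀) i with h₀ | h₀ <;>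
    rcases mem_Vcube_iff.mp (act_mem_Vcube hA hu) i with h | h <;>
    rw [h₀, h] at hsum
  all_goals first
    | exact Or.inl (by linarith)
    | exact Or.inr (Or.inl (by linarith))
    | exact Or.inr (Or.inr (by linarith))

theorem act_signedPermMatrix_apply (σ : Perm (Fin 3)) (s : Fin 3 → ℤˣ)
    (p : EuclideanSpace ℝ (Fin 3)) (j : Fin 3) :
    act (signedPermMatrix σ s) p (σ j) = (s j : ℝ) * p j :=
  signedPermMatrix_mulVec_apply σ s p j

theorem signedPermMatrix_mem_Gcube {σ : Perm (Fin 3)} {s : Fin 3 → ℤˣ}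
    (h : Perm.sign σ * ∏ i, s i = 1) : signedPermMatrix σ s ∈ Gcube := by
  refine ⟨⟨transpose_signedPermMatrix_mul_self σ s, by simp [det_signedPermMatrix, h]⟩, ?_⟩
  have hsign : ∀ j (x : ℝ), x = 1 ∨ x = -1 → (s j : ℝ) * x = 1 ∨ (s j : ℝ) * x = -1 := by
    intro j x hx
    rcases Int.units_eq_one_or (s j) with h | h <;> rcases hx with rfl | rfl <;> simp [h]
  ext q
  constructor
  · rintro ⟨p, hp, rfl⟩
    rw [mem_Vcube_iff] at hp ⊢
    refine σ.surjective.forall.mpr fun j => ?_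
    rw [act_signedPermMatrix_apply]
    exact hsign j _ (hp j)
  · intro hq
    rw [mem_Vcube_iff] at hq
    refine ⟨WithLp.toLp 2 fun j => (s j : ℝ) * q (σ j),
      mem_Vcube_iff.mpr fun j => hsign j _ (hq (σ j)), ?_⟩
    refine congrArg (WithLp.toLp 2) ((signedPermMatrix_mulVec_eq_iff σ s _ _).mpr fun j => ?_)
    simp [← mul_assoc, ← Int.cast_mul, ← Units.val_mul]

def detOneSignedPerms : Finset (Perm (Fin 3) × (Fin 3 → ℤˣ)) :=
  Finset.univ.filter fun p => Perm.sign p.1 * ∏ i, p.2 i = 1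

theorem card_detOneSignedPerms : detOneSignedPerms.card = 24 := by
  decide +kernel

theorem Gcube_eq_image :
    Gcube = (fun p : Perm (Fin 3) × (Fin 3 → ℤˣ) => signedPermMatrix p.1 p.2) ''
      detOneSignedPerms := by
  ext A
  constructor
  · intro hA
    obtain ⟨σ, s, rfl⟩ := exists_signedPermMatrix_of_transpose_mul_self_eq_one hA.1.1
      (entry_eq_zero_or_eq_one_or_eq_neg_one_of_mem_Gcube hA)
    have hdet := hA.1.2
    rw [det_signedPermMatrix, Int.cast_eq_one, Units.val_eq_one] at hdet
    exact ⟨(σ, s), Finset.mem_filter.mpr ⟨Finset.mem_univ _, hdet⟩, rfl⟩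
  · rintro ⟨⟨σ, s⟩, hp, rfl⟩
    exact signedPermMatrix_mem_Gcube (Finset.mem_filter.mp hp).2

theorem ncard_Gcube : Gcube.ncard = 24 := by
  rw [Gcube_eq_image, Set.ncard_image_of_injective _ signedPermMatrix_injective,
    Set.ncard_coe_finset, card_detOneSignedPerms]

theorem card_detOneSignedPerms_fixing_le_four (w : Fin 3 → SignType) (hw : w ≠ 0) :
    (detOneSignedPerms.filter fun p => ∀ j, (w (p.1 j) : ℤ) = p.2 j * w j).card ≤ 4 := by
  revert w
  decide +kernel

open Pointwise

noncomputable instance :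
    MulAction (specialOrthogonalGroup (Fin 3) ℝ) (EuclideanSpace ℝ (Fin 3)) where
  smul A := act A
  one_smul v := by simp [HSMul.hSMul, act]
  mul_smul A B v := by simp [HSMul.hSMul, act, mulVec_mulVec]

noncomputable def cubeGroup : Subgroup (specialOrthogonalGroup (Fin 3) ℝ) :=
  MulAction.stabilizer _ Vcube

-- A shortcut instance: otherwise the search for it times out in the `WithLp` instances.
noncomputable instance : SMul cubeGroup (EuclideanSpace ℝ (Fin 3)) :=
  (cubeGroup.instMulAction : MulAction cubeGroup (EuclideanSpace ℝ (Fin 3))).toSMul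

theorem mem_cubeGroup_iff {g : specialOrthogonalGroup (Fin 3) ℝ} :
    g ∈ cubeGroup ↔ act g '' Vcube = Vcube := by
  rw [cubeGroup, MulAction.mem_stabilizer_iff, ← Set.image_smul]
  rfl

theorem isRotation_iff_mem_specialOrthogonalGroup {A : Matrix (Fin 3) (Fin 3) ℝ} :
    IsRotation A ↔ A ∈ specialOrthogonalGroup (Fin 3) ℝ := by
  rw [mem_specialOrthogonalGroup_iff, mem_orthogonalGroup_iff']
  rfl

theorem range_coe_cubeGroup :
    Set.range (fun g : cubeGroup => (g : Matrix (Fin 3) (Fin 3) ℝ)) = Gcube := by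
  ext A
  constructor
  · rintro ⟨⟨g, hg⟩, rfl⟩
    exact ⟨isRotation_iff_mem_specialOrthogonalGroup.mpr g.2, mem_cubeGroup_iff.mp hg⟩
  · rintro ⟨hrot, himg⟩
    exact ⟨⟨⟨A, isRotation_iff_mem_specialOrthogonalGroup.mp hrot⟩, mem_cubeGroup_iff.mpr himg⟩,
      rfl⟩

theorem orbit_cubeGroup (v : EuclideanSpace ℝ (Fin 3)) :
    MulAction.orbit cubeGroup v = orb Gcube v := by
  ext w
  rw [orb, ← range_coe_cubeGroup, Set.mem_ofPred_eq, Set.exists_range_iff]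
  rfl

theorem card_cubeGroup : Nat.card cubeGroup = 24 := by
  rw [← Nat.card_range_of_injective (Subtype.val_injective.comp Subtype.val_injective),
    ← ncard_Gcube, ← range_coe_cubeGroup, Nat.card_coe_set_eq]
  rfl

theorem card_stabilizer_cubeGroup_le {v : EuclideanSpace ℝ (Fin 3)} (hv : v ≠ 0) :
    Nat.card (MulAction.stabilizer cubeGroup v) ≤ 4 := by
  let w : Fin 3 → SignType := fun i => SignType.sign (v i)
  have hw : w ≠ 0 := fun h => hv (by ext i; simpa [w] using congrFun h i)
  let f : cubeGroup → Matrix (Fin 3) (Fin 3) ℝ := fun g => g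
  have hf : Function.Injective f := Subtype.val_injective.comp Subtype.val_injective
  have hsub : f '' (MulAction.stabilizer cubeGroup v) ⊆
      (fun p : Perm (Fin 3) × (Fin 3 → ℤˣ) => signedPermMatrix p.1 p.2) ''
        (detOneSignedPerms.filter fun p => ∀ j, (w (p.1 j) : ℤ) = p.2 j * w j) := by
    rintro _ ⟨g, hg, rfl⟩
    obtain ⟨p, hp, hpg⟩ : f g ∈ (fun p : Perm (Fin 3) × (Fin 3 → ℤˣ) =>
        signedPermMatrix p.1 p.2) '' detOneSignedPerms := by
      rw [← Gcube_eq_image, ← range_coe_cubeGroup]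
      exact ⟨g, rfl⟩
    have hfix : signedPermMatrix p.1 p.2 *ᵥ v = v := by
      rw [show signedPermMatrix p.1 p.2 = f g from hpg]
      exact congrArg WithLp.ofLp hg
    exact ⟨p, Finset.mem_filter.mpr ⟨hp, sign_apply_of_signedPermMatrix_mulVec_eq_self hfix⟩, hpg⟩
  calc Nat.card (MulAction.stabilizer cubeGroup v)
      = (f '' MulAction.stabilizer cubeGroup v).ncard := by
        rw [Set.ncard_image_of_injective _ hf]
        exact (Nat.card_coe_set_eq _).symm
    _ ≤ _ := Set.ncard_le_ncard hsub
    _ ≤ _ := Set.ncard_image_le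
    _ ≤ 4 := by
        rw [Set.ncard_coe_finset]
        exact card_detOneSignedPerms_fixing_le_four w hw

/-- Every orbit of a nonzero vector under the octahedral rotation group has
cardinality 6, 8, 12, or 24. -/
theorem octahedral_orbit_card (v : EuclideanSpace ℝ (Fin 3)) (hv : v ≠ 0) :
    (orb Gcube v).ncard = 6 ∨ (orb Gcube v).ncard = 8 ∨ (orb Gcube v).ncard = 12 ∨
      (orb Gcube v).ncard = 24 := by
  have horbit_stab : (orb Gcube v).ncard * Nat.card (MulAction.stabilizer cubeGroup v) = 24 := by
    rw [← orbit_cubeGroup, ← MulAction.index_stabilizer, Subgroup.index_mul_card, card_cubeGroup]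
  have hstab_le := card_stabilizer_cubeGroup_le hv
  interval_cases Nat.card (MulAction.stabilizer cubeGroup v) <;> omega
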